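/- Let L = ⊕_{n∈Z} L_n be a weakly Z-graded Lie algebra over a field K of characteristic 0 that is simple as a Lie algebra, with L ≠ L_0, and such that the positive part L_{>0} and negative part L_{<0} are each finitely generated Lie algebras with all their homogeneous components finite-dimensional. Then L_0 is finite-dimensional. -/

import Mathlib

/-- `comp` is a weak `ℤ`-grading of the Lie algebra `L`: `L = ⊕ₙ Lₙ` with
`⁅Lₙ, Lₘ⁆ ⊆ L_{n+m}`, with no finiteness assumption on the components. -/
def IsWeakZGradedLie (K L : Type*) [Field K] [LieRing L] [LieAlgebra K L]
    (comp : ℤ → Submodule K L) : Prop :=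
  DirectSum.IsInternal comp ∧
    ∀ n m : ℤ, ∀ x ∈ comp n, ∀ y ∈ comp m, ⁅x, y⁆ ∈ comp (n + m)

/-!
Let `M` be the sum of the finitely many nonzero-degree components that contain finite generating
sets of `L_{>0}` and `L_{<0}`: it is finite-dimensional and `ad L₀`-stable. An element of `L₀`
acting trivially on `M` kills the generators, hence all of `⊕_{n ≠ 0} Lₙ`. By the Jacobi identity
and `⁅L₀, Lₙ⁆ ⊆ Lₙ`, the elements of `L₀` with this property form an ideal of `L`, a proper one
since `L₀ ≠ L`; by simplicity it is zero, so `L₀` embeds into `End M`.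
-/

theorem Submodule.exists_finset_coe_subset_finsetSup {R M ι : Type*} [Semiring R]
    [AddCommMonoid M] [Module R M] (p : ι → Submodule R M) {S : Finset M}
    (hS : (S : Set M) ⊆ (⨆ i, p i : Submodule R M)) :
    ∃ T : Finset ι, (S : Set M) ⊆ (T.sup p : Submodule R M) := by
  obtain ⟨T, hT⟩ := CompleteLattice.IsCompactElement.exists_finset_of_le_iSup _
    (finset_span_isCompactElement S) p (span_le.mpr hS)
  exact ⟨T, span_le.mp (by rwa [Finset.sup_eq_iSup])⟩

theorem FiniteDimensional.of_lie_faithful {K L : Type*} [Field K] [LieRing L] [LieAlgebra K L]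
    {V M : Submodule K L} [FiniteDimensional K M] (hstab : ∀ v ∈ V, ∀ m ∈ M, ⁅v, m⁆ ∈ M)
    (hfaithful : ∀ v ∈ V, (∀ m ∈ M, ⁅v, m⁆ = 0) → v = 0) : FiniteDimensional K V := by
  let φ : V →ₗ[K] Module.End K M :=
    { toFun := fun v => (LieAlgebra.ad K L v).restrict (hstab v v.2)
      map_add' := fun v w => by ext; exact add_lie _ _ _
      map_smul' := fun c v => by ext; exact smul_lie _ _ _ }
  refine FiniteDimensional.of_injective φ (LinearMap.ker_eq_bot.mp ?_)
  refine LinearMap.ker_eq_bot'.mpr fun v hv => Subtype.ext (hfaithful v v.2 fun m hm => ?_)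
  exact congrArg (fun f : Module.End K M => (f ⟨m, hm⟩ : L)) hv

theorem lie_eq_zero_of_mem_lieSpan {R L : Type*} [CommRing R] [LieRing L] [LieAlgebra R L]
    {S : Set L} {x y : L} (hS : ∀ s ∈ S, ⁅x, s⁆ = 0)
    (hy : y ∈ LieSubalgebra.lieSpan R L S) : ⁅x, y⁆ = 0 := by
  induction hy using LieSubalgebra.lieSpan_induction with
  | mem s hs => exact hS s hs
  | zero => exact lie_zero x
  | add a b _ _ ha hb => rw [lie_add, ha, hb, add_zero]
  | smul t a _ ha => rw [lie_smul, ha, smul_zero]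
  | lie a b _ _ ha hb => rw [leibniz_lie, ha, hb, zero_lie, lie_zero, add_zero]

section Graded

variable {R L : Type*} [CommRing R] [LieRing L] [LieAlgebra R L] {comp : ℤ → Submodule R L}

variable (comp) in
def degreeZeroCentralizer : Submodule R L where
  carrier := {x | x ∈ comp 0 ∧ ∀ n ≠ 0, ∀ z ∈ comp n, ⁅x, z⁆ = 0}
  add_mem' := fun ⟨hx₀, hx⟩ ⟨hy₀, hy⟩ =>
    ⟨add_mem hx₀ hy₀, fun n hn z hz => by rw [add_lie, hx n hn z hz, hy n hn z hz, add_zero]⟩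
  zero_mem' := ⟨zero_mem _, fun _ _ z _ => zero_lie z⟩
  smul_mem' := fun c _ ⟨hx₀, hx⟩ =>
    ⟨Submodule.smul_mem _ c hx₀, fun n hn z hz => by rw [smul_lie, hx n hn z hz, smul_zero]⟩

theorem mem_degreeZeroCentralizer_of_lie_generators_eq_zero {Sp Sn : Set L}
    (hSp : (LieSubalgebra.lieSpan R L Sp : Set L) = (⨆ k > (0 : ℤ), comp k : Submodule R L))
    (hSn : (LieSubalgebra.lieSpan R L Sn : Set L) = (⨆ k < (0 : ℤ), comp k : Submodule R L))
    {x : L} (hx : x ∈ comp 0) (hgen : ∀ s ∈ Sp ∪ Sn, ⁅x, s⁆ = 0) :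
    x ∈ degreeZeroCentralizer comp := by
  refine ⟨hx, fun n hn z hz => ?_⟩
  rcases hn.lt_or_gt with hneg | hpos
  · have hz' : z ∈ ((⨆ k < (0 : ℤ), comp k : Submodule R L) : Set L) :=
      le_iSup₂ (f := fun k (_ : k < 0) => comp k) n hneg hz
    rw [← hSn] at hz'
    exact lie_eq_zero_of_mem_lieSpan (fun s hs => hgen s (Or.inr hs)) hz'
  · have hz' : z ∈ ((⨆ k > (0 : ℤ), comp k : Submodule R L) : Set L) :=
      le_iSup₂ (f := fun k (_ : 0 < k) => comp k) n hpos hz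
    rw [← hSp] at hz'
    exact lie_eq_zero_of_mem_lieSpan (fun s hs => hgen s (Or.inl hs)) hz'

variable (hlie : ∀ n m : ℤ, ∀ x ∈ comp n, ∀ y ∈ comp m, ⁅x, y⁆ ∈ comp (n + m))
include hlie

theorem lie_mem_comp_of_mem_comp_zero {y z : L} {n : ℤ} (hy : y ∈ comp 0) (hz : z ∈ comp n) :
    ⁅y, z⁆ ∈ comp n := by
  simpa using hlie 0 n y hy z hz

theorem lie_mem_finsetSup_of_mem_comp_zero {ι : Type*} (f : ι → ℤ) (T : Finset ι) {y m : L}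
    (hy : y ∈ comp 0) (hm : m ∈ T.sup fun i => comp (f i)) :
    ⁅y, m⁆ ∈ T.sup fun i => comp (f i) := by
  have hle : (T.sup fun i => comp (f i)) ≤
      (T.sup fun i => comp (f i)).comap (LieAlgebra.ad R L y) :=
    Finset.sup_le fun i hi z hz =>
      Finset.le_sup (f := fun i => comp (f i)) hi (lie_mem_comp_of_mem_comp_zero hlie hy hz)
  exact hle hm

theorem lie_homogeneous_mem_degreeZeroCentralizer {n : ℤ} {y a : L} (hy : y ∈ comp n)
    (ha : a ∈ degreeZeroCentralizer comp) : ⁅y, a⁆ ∈ degreeZeroCentralizer comp := by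
  obtain ⟨ha₀, ha⟩ := ha
  rcases eq_or_ne n 0 with rfl | hn
  · refine ⟨lie_mem_comp_of_mem_comp_zero hlie hy ha₀, fun m hm z hz => ?_⟩
    rw [lie_lie, ha m hm z hz, lie_zero, ha m hm _ (lie_mem_comp_of_mem_comp_zero hlie hy hz),
      sub_zero]
  · rw [← lie_skew, ha n hn y hy, neg_zero]
    exact zero_mem _

variable (hspan : ⨆ n, comp n = ⊤)
include hspan

def degreeZeroCentralizerIdeal : LieIdeal R L :=
  { degreeZeroCentralizer comp with
    lie_mem := fun {x a} ha => by
      have hx : x ∈ ⨆ n, comp n := hspan ▸ Submodule.mem_top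
      refine Submodule.iSup_induction comp
        (motive := fun x => ⁅x, a⁆ ∈ degreeZeroCentralizer comp) hx
        (fun n y hy => lie_homogeneous_mem_degreeZeroCentralizer hlie hy ha) ?_ ?_
      · simpa only [zero_lie] using zero_mem _
      · intro y z hy hz
        simpa only [add_lie] using add_mem hy hz }

theorem degreeZeroCentralizer_eq_bot [LieAlgebra.IsSimple R L] (hne : comp 0 ≠ ⊤) :
    degreeZeroCentralizer comp = ⊥ := by
  have hI := LieAlgebra.IsSimple.eq_bot_or_eq_top (degreeZeroCentralizerIdeal hlie hspan)
  refine hI.elim (fun h => congrArg LieSubmodule.toSubmodule h) fun h => (hne ?_).elim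
  refine eq_top_iff.mpr fun x _ => ?_
  have hx : x ∈ degreeZeroCentralizerIdeal hlie hspan := h ▸ LieSubmodule.mem_top x
  exact hx.1

end Graded

theorem zeroComponent_finiteDimensional_general
    (K : Type*) [Field K]
    (L : Type*) [LieRing L] [LieAlgebra K L]
    (comp : ℤ → Submodule K L) (hgr : IsWeakZGradedLie K L comp)
    (hsimple : LieAlgebra.IsSimple K L)
    (hne : comp 0 ≠ ⊤)
    (hfd : ∀ n : ℤ, n ≠ 0 → FiniteDimensional K (comp n))
    (hfgpos : ∃ S : Finset L,
      ((LieSubalgebra.lieSpan K L ↑S : LieSubalgebra K L) : Set L)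
        = ((⨆ k > (0 : ℤ), comp k : Submodule K L) : Set L))
    (hfgneg : ∃ S : Finset L,
      ((LieSubalgebra.lieSpan K L ↑S : LieSubalgebra K L) : Set L)
        = ((⨆ k < (0 : ℤ), comp k : Submodule K L) : Set L)) :
    FiniteDimensional K (comp 0) := by
  classical
  obtain ⟨hint, hlie⟩ := hgr
  obtain ⟨Sp, hSp⟩ := hfgpos
  obtain ⟨Sn, hSn⟩ := hfgneg
  have hle : ∀ P : ℤ → Prop, (∀ n, P n → n ≠ 0) →
      (⨆ n, ⨆ (_ : P n), comp n) ≤ ⨆ n : {n : ℤ // n ≠ 0}, comp n :=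
    fun P hP => iSup₂_le fun n hn => le_iSup_of_le ⟨n, hP n hn⟩ le_rfl
  have hgen :
      ((Sp ∪ Sn : Finset L) : Set L) ⊆ (⨆ n : {n : ℤ // n ≠ 0}, comp n : Submodule K L) := by
    rw [Finset.coe_union]
    refine Set.union_subset ?_ ?_
    · exact LieSubalgebra.subset_lieSpan.trans (hSp.subset.trans (hle _ fun n hn => hn.ne'))
    · exact LieSubalgebra.subset_lieSpan.trans (hSn.subset.trans (hle _ fun n hn => hn.ne))
  obtain ⟨T, hT⟩ := Submodule.exists_finset_coe_subset_finsetSup _ hgen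
  have : ∀ n : {n : ℤ // n ≠ 0}, FiniteDimensional K (comp n) := fun n => hfd n n.2
  refine FiniteDimensional.of_lie_faithful (M := T.sup fun n => comp n)
    (fun y hy m hm => lie_mem_finsetSup_of_mem_comp_zero hlie _ T hy hm) fun y hy hyM => ?_
  have hcent : y ∈ degreeZeroCentralizer comp :=
    mem_degreeZeroCentralizer_of_lie_generators_eq_zero hSp hSn hy fun s hs =>
      hyM s (hT (by simpa using hs))
  rwa [degreeZeroCentralizer_eq_bot hlie hint.submodule_iSup_eq_top hne] at hcent

/-- Let `L` be a weakly `ℤ`-graded Lie algebra over a field of characteristic zero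
that is simple as a Lie algebra, with `L ≠ L₀`, whose homogeneous components of
nonzero degree are finite-dimensional, and whose positive part `L_{>0}` and
negative part `L_{<0}` are finitely generated Lie subalgebras.  Then `L₀` is
finite-dimensional. -/
theorem zeroComponent_finiteDimensional
    (K : Type*) [Field K] [CharZero K]
    (L : Type*) [LieRing L] [LieAlgebra K L]
    (comp : ℤ → Submodule K L) (hgr : IsWeakZGradedLie K L comp)
    (hsimple : LieAlgebra.IsSimple K L)
    (hne : comp 0 ≠ ⊤)
    (hfd : ∀ n : ℤ, n ≠ 0 → FiniteDimensional K (comp n))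
    (hfgpos : ∃ S : Finset L,
      ((LieSubalgebra.lieSpan K L ↑S : LieSubalgebra K L) : Set L)
        = ((⨆ k > (0 : ℤ), comp k : Submodule K L) : Set L))
    (hfgneg : ∃ S : Finset L,
      ((LieSubalgebra.lieSpan K L ↑S : LieSubalgebra K L) : Set L)
        = ((⨆ k < (0 : ℤ), comp k : Submodule K L) : Set L)) :
    FiniteDimensional K (comp 0) :=
  zeroComponent_finiteDimensional_general K L comp hgr hsimple hne hfd hfgpos hfgneg
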